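/- For all integers a, b ≥ 0 and ν ≥ k ≥ 1, the number of (an+b)-color compositions of ν with k parts equals Σ_{j=0}^{k} a^j b^{k-j} C(k,j) C(ν+j-1, ν-k). -/

import Mathlib

/-!
A colour composition is a composition `(i₁, …, i_k)` of `ν` together with an independent choice
of one of `a iₜ + b` colours for every part, so the count is `[X^ν] φ ^ k` for
`φ = ∑_{i ≥ 1} (a i + b) Xⁱ`. Writing `g = 1/(1 - X)`, one has
`φ = X g (a g + b)`, hence by the binomial theorem
`φ ^ k = Xᵏ ∑ⱼ C(k,j) aʲ b^(k-j) g^(k+j)`, and `[Xⁿ] g^d = C(n + d - 1, n)`.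
-/

open Finset PowerSeries

theorem card_decorated_antidiagonalTuple {β : Type*} (s : ℕ → Finset β) (k n : ℕ) :
    Nat.card {f : Fin k → ℕ × β // ∑ t, (f t).1 = n ∧ ∀ t, (f t).2 ∈ s (f t).1} =
      ∑ y ∈ Nat.antidiagonalTuple k n, ∏ t, #(s (y t)) := by
  let e : {f : Fin k → ℕ × β // ∑ t, (f t).1 = n ∧ ∀ t, (f t).2 ∈ s (f t).1} ≃
      Σ y : Nat.antidiagonalTuple k n, ∀ t, s (y.1 t) :=
    { toFun f := ⟨⟨fun t => (f.1 t).1, Nat.mem_antidiagonalTuple.2 f.2.1⟩,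
        fun t => ⟨(f.1 t).2, f.2.2 t⟩⟩
      invFun y := ⟨fun t => (y.1.1 t, y.2 t), Nat.mem_antidiagonalTuple.1 y.1.2,
        fun t => (y.2 t).2⟩
      left_inv _ := rfl
      right_inv _ := rfl }
  rw [Nat.card_congr e, Nat.card_eq_fintype_card, Fintype.card_sigma]
  simp only [Fintype.card_pi, Fintype.card_coe]
  exact sum_coe_sort _ (fun y : Fin k → ℕ => ∏ t, #(s (y t)))

namespace PowerSeries

theorem coeff_pow_eq_sum_antidiagonalTuple {R : Type*} [CommSemiring R] (φ : R⟦X⟧) (k n : ℕ) :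
    coeff n (φ ^ k) = ∑ y ∈ Nat.antidiagonalTuple k n, ∏ t, coeff (y t) φ := by
  rw [← Fin.prod_const, coeff_prod, finsuppAntidiag, sum_map,
    ← piAntidiag_univ_fin_eq_antidiagonalTuple, ← sum_attach (piAntidiag _ _)]
  rfl

/-- For `d = 0` the truncated subtraction gives `C(n - 1, n)`, which is `1` at `n = 0` and `0`
otherwise, as it should be. -/
theorem coeff_mk_one_pow {S : Type*} [CommRing S] (d n : ℕ) :
    coeff n ((PowerSeries.mk 1 : S⟦X⟧) ^ d) = (n + d - 1).choose n := by
  cases d with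
  | zero => cases n <;> simp [coeff_one]
  | succ d =>
    rw [mk_one_pow_eq_mk_choose_add, coeff_mk, Nat.choose_symm_add, add_comm d n]
    rfl

end PowerSeries

/-- Parts of size `0` get no colours: this is what forces the parts to be positive. -/
def colorSeries (R : Type*) [Semiring R] (w : ℕ → ℕ) : R⟦X⟧ :=
  PowerSeries.mk fun i => if i = 0 then 0 else (w i : R)

theorem natCast_card_colorCompositions {R : Type*} [CommSemiring R] (w : ℕ → ℕ) (k n : ℕ) :
    (Nat.card {f : Fin k → ℕ × ℕ //
        (∀ t, 1 ≤ (f t).1) ∧ ∑ t, (f t).1 = n ∧ ∀ t, 1 ≤ (f t).2 ∧ (f t).2 ≤ w (f t).1} : R) =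
      coeff n (colorSeries R w ^ k) := by
  let colors (i : ℕ) : Finset ℕ := if i = 0 then ∅ else Icc 1 (w i)
  have mem_colors {i ℓ : ℕ} : ℓ ∈ colors i ↔ 1 ≤ i ∧ 1 ≤ ℓ ∧ ℓ ≤ w i := by
    by_cases hi : i = 0 <;> simp [colors, hi, Nat.one_le_iff_ne_zero]
  have card_colors (i : ℕ) : #(colors i) = if i = 0 then 0 else w i := by
    by_cases hi : i = 0 <;> simp [colors, hi]
  have e : {f : Fin k → ℕ × ℕ //
        (∀ t, 1 ≤ (f t).1) ∧ ∑ t, (f t).1 = n ∧ ∀ t, 1 ≤ (f t).2 ∧ (f t).2 ≤ w (f t).1} ≃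
      {f : Fin k → ℕ × ℕ // ∑ t, (f t).1 = n ∧ ∀ t, (f t).2 ∈ colors (f t).1} :=
    Equiv.subtypeEquivRight fun f => by simp only [mem_colors, forall_and]; tauto
  rw [Nat.card_congr e, card_decorated_antidiagonalTuple, coeff_pow_eq_sum_antidiagonalTuple]
  push_cast [card_colors, Nat.cast_ite]
  simp only [colorSeries, coeff_mk]

theorem colorSeries_linear {S : Type*} [CommRing S] (a b : ℕ) :
    colorSeries S (fun i => a * i + b) =
      X * PowerSeries.mk 1 * (C (a : S) * PowerSeries.mk 1 + C (b : S)) := by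
  ext (_ | n)
  · simp [colorSeries]
  · have : (X : S⟦X⟧) * PowerSeries.mk 1 * (C (a : S) * PowerSeries.mk 1 + C (b : S)) =
        X * (C (a : S) * PowerSeries.mk 1 ^ 2 + C (b : S) * PowerSeries.mk 1 ^ 1) := by
      ring
    rw [colorSeries, coeff_mk, this, coeff_succ_X_mul, map_add, coeff_C_mul, coeff_C_mul,
      coeff_mk_one_pow, coeff_mk_one_pow]
    simp [Nat.choose_succ_self_right]

theorem coeff_colorSeries_linear_pow {S : Type*} [CommRing S] (a b : ℕ) {k ν : ℕ} (hν : k ≤ ν) :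
    coeff ν (colorSeries S (fun i => a * i + b) ^ k) =
      ((∑ j ∈ range (k + 1), a ^ j * b ^ (k - j) * k.choose j * (ν + j - 1).choose (ν - k) : ℕ) :
        S) := by
  rw [colorSeries_linear]
  set g : S⟦X⟧ := PowerSeries.mk 1
  have expand : (X * g * (C (a : S) * g + C (b : S))) ^ k =
      X ^ k * ∑ j ∈ range (k + 1), C ((a ^ j * b ^ (k - j) * k.choose j : ℕ) : S) * g ^ (k + j) := by
    rw [mul_pow, mul_pow, add_pow, mul_assoc, Finset.mul_sum]
    congr 1
    refine Finset.sum_congr rfl fun j _ => ?_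
    simp only [Nat.cast_mul, Nat.cast_pow, map_mul, map_pow, map_natCast]
    ring
  rw [expand, coeff_X_pow_mul', if_pos hν, map_sum, Nat.cast_sum]
  refine Finset.sum_congr rfl fun j _ => ?_
  rw [coeff_C_mul, coeff_mk_one_pow, ← Nat.cast_mul, show ν - k + (k + j) - 1 = ν + j - 1 by omega]

theorem card_color_compositions_general (a b ν k : ℕ) (hν : k ≤ ν) :
    Nat.card {f : Fin k → ℕ × ℕ //
        (∀ t, 1 ≤ (f t).1) ∧ (∑ t, (f t).1) = ν ∧
        (∀ t, 1 ≤ (f t).2 ∧ (f t).2 ≤ a * (f t).1 + b)} =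
      ∑ j ∈ Finset.range (k + 1),
        a ^ j * b ^ (k - j) * Nat.choose k j * Nat.choose (ν + j - 1) (ν - k) := by
  have h := natCast_card_colorCompositions (R := ℤ) (fun i => a * i + b) k ν
  rw [coeff_colorSeries_linear_pow a b hν] at h
  exact_mod_cast h

/-- The number of `(an+b)`-color compositions of `ν` with `k` parts, i.e. `k`-tuples
`((i₁,ℓ₁),…,(i_k,ℓ_k))` with `iₜ ≥ 1`, `Σ iₜ = ν` and `1 ≤ ℓₜ ≤ a·iₜ + b`, equals
`Σ_{j=0}^{k} aʲ b^{k-j} C(k,j) C(ν+j-1, ν-k)`. -/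
theorem card_color_compositions (a b ν k : ℕ) (hk : 1 ≤ k) (hν : k ≤ ν) :
    Nat.card {f : Fin k → ℕ × ℕ //
        (∀ t, 1 ≤ (f t).1) ∧ (∑ t, (f t).1) = ν ∧
        (∀ t, 1 ≤ (f t).2 ∧ (f t).2 ≤ a * (f t).1 + b)} =
      ∑ j ∈ Finset.range (k + 1),
        a ^ j * b ^ (k - j) * Nat.choose k j * Nat.choose (ν + j - 1) (ν - k) :=
  card_color_compositions_general a b ν k hν
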